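/- arXiv:2412.08021 — 3 statements merged into one kernel-verified Lean document; each statement's English description precedes it below -/
import Mathlib

section
/- Fix d ≥ 1 and let σ denote the uniform probability measure on the unit sphere 𝕊^{d−1} ⊂ ℝ^d, and set λ₀ = 1/(2d). There exist constants C > 0 and δ > 0 such that for every probability space (Ω, ν) and every bounded measurable map Δ : Ω → ℝ^d with ‖Δ(ω)‖ ≤ δ for ν-almost every ω, | λ₀ (1 − ∫_Ω ‖Δ(ω)‖² dν(ω)) + ∫_Ω log ( ∫_{𝕊^{d−1}} e^{⟨Δ(ω),z⟩} dσ(z) ) dν(ω) − λ₀ | ≤ C ∫_Ω ‖Δ(ω)‖³ dν(ω). -/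
/-!
Write `a = ‖x‖² / (2 d)`. Invariance of `σ` under `z ↦ -z` kills the first moment of `⟪x, z⟫`, and
invariance under the reflections exchanging two vectors of equal norm makes `∫ ⟪x, z⟫² dσ` depend
only on `‖x‖`; summing it over an orthonormal basis gives `∫ ‖z‖² dσ = 1`, hence the value
`‖x‖² / d`. Integrating the cubic Taylor bound for `exp` then gives
`|∫ e^{⟪x, z⟫} dσ - 1 - a| ≤ (2/9) ‖x‖³`, and the quadratic bound for `log (1 + u)` turns this into
`|log ∫ e^{⟪x, z⟫} dσ - a| ≤ 3 ‖x‖³` for `‖x‖ ≤ 1/2`. Putting `x = Δ(ω)` and integrating in `ω`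
gives the theorem with `C = 3`, `δ = 1/2`.
-/

open MeasureTheory RealInnerProductSpace Module

lemma Real.abs_exp_sub_one_sub_id_sub_sq_div_two_le {t : ℝ} (ht : |t| ≤ 1) :
    |Real.exp t - 1 - t - t ^ 2 / 2| ≤ 2 / 9 * |t| ^ 3 := by
  have h := Real.exp_bound ht (n := 3) (by norm_num)
  norm_num [Finset.sum_range_succ, Nat.factorial] at h
  rw [show Real.exp t - 1 - t - t ^ 2 / 2 = Real.exp t - (1 + t + t ^ 2 / 2) by ring, mul_comm]
  exact h

lemma Real.abs_log_one_add_sub_self_le {u : ℝ} (hu : |u| ≤ 1 / 4) :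
    |Real.log (1 + u) - u| ≤ 4 / 3 * u ^ 2 := by
  have h := Real.abs_log_sub_add_sum_range_le (x := -u) (by rw [abs_neg]; linarith) 1
  norm_num [abs_neg] at h
  calc |Real.log (1 + u) - u| = |-u + Real.log (1 + u)| := by ring_nf
    _ ≤ u ^ 2 / (1 - |u|) := h
    _ ≤ u ^ 2 / (3 / 4) := by gcongr; linarith
    _ = 4 / 3 * u ^ 2 := by ring

lemma Real.abs_log_sub_le_of_abs_sub_one_sub_le {F a r : ℝ} (hr₀ : 0 ≤ r) (hr : r ≤ 1 / 2)
    (ha₀ : 0 ≤ a) (ha : a ≤ r ^ 2 / 2) (hF : |F - 1 - a| ≤ 2 / 9 * r ^ 3) :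
    |Real.log F - a| ≤ 3 * r ^ 3 := by
  have hr3 : r ^ 3 ≤ r ^ 2 / 2 := by nlinarith
  have hu : |F - 1| ≤ r ^ 2 := by
    calc |F - 1| = |(F - 1 - a) + a| := by ring_nf
      _ ≤ |F - 1 - a| + |a| := abs_add_le _ _
      _ ≤ r ^ 2 := by rw [abs_of_nonneg ha₀]; nlinarith
  have hlog := Real.abs_log_one_add_sub_self_le (u := F - 1) (hu.trans (by nlinarith))
  have hu2 : (F - 1) ^ 2 ≤ r ^ 3 / 2 := by
    calc (F - 1) ^ 2 = |F - 1| ^ 2 := (sq_abs _).symm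
      _ ≤ (r ^ 2) ^ 2 := by gcongr
      _ ≤ r ^ 3 / 2 := by nlinarith [pow_nonneg hr₀ 3]
  calc |Real.log F - a| = |(Real.log (1 + (F - 1)) - (F - 1)) + (F - 1 - a)| := by ring_nf
    _ ≤ |Real.log (1 + (F - 1)) - (F - 1)| + |F - 1 - a| := abs_add_le _ _
    _ ≤ 3 * r ^ 3 := by nlinarith [pow_nonneg hr₀ 3]

section Sphere

variable {E : Type*} [NormedAddCommGroup E] [InnerProductSpace ℝ E] [MeasurableSpace E]
  {σ : Measure E}

lemma ae_abs_inner_le_norm (hσ : ∀ᵐ z ∂σ, ‖z‖ = 1) (x : E) : ∀ᵐ z ∂σ, |⟪x, z⟫| ≤ ‖x‖ := by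
  filter_upwards [hσ] with z hz
  simpa [hz] using abs_real_inner_le_norm x z

lemma finrank_pos_of_ae_norm_eq_one [IsProbabilityMeasure σ] [FiniteDimensional ℝ E]
    (hσ : ∀ᵐ z ∂σ, ‖z‖ = 1) :
    0 < finrank ℝ E := by
  obtain ⟨z, hz⟩ := hσ.exists
  have : Nontrivial E := nontrivial_of_ne z 0 (by rintro rfl; simp at hz)
  exact finrank_pos

variable [BorelSpace E]

lemma integral_inner_eq_zero [σ.IsNegInvariant] (x : E) : ∫ z, ⟪x, z⟫ ∂σ = 0 := by
  have h := integral_neg_eq_self (fun z => ⟪x, z⟫) σ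
  simp only [inner_neg_right, integral_neg] at h
  linarith

lemma integral_inner_sq_eq_of_norm_eq
    (hinv : ∀ R : E ≃ₗᵢ[ℝ] E, σ.map R = σ) {u v : E} (huv : ‖u‖ = ‖v‖) :
    ∫ z, ⟪u, z⟫ ^ 2 ∂σ = ∫ z, ⟪v, z⟫ ^ 2 ∂σ := by
  set R := Submodule.reflection (ℝ ∙ (u - v))ᗮ
  have hRu : R u = v := Submodule.reflection_sub huv
  conv_rhs => rw [← hinv R]
  rw [integral_map R.continuous.aemeasurable
    ((continuous_const.inner continuous_id).pow 2).aestronglyMeasurable]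
  simp_rw [← hRu, R.inner_map_map]

variable (hσ : ∀ᵐ z ∂σ, ‖z‖ = 1)
include hσ

lemma integrable_inner_sq [IsFiniteMeasure σ] (x : E) :
    Integrable (fun z => ⟪x, z⟫ ^ 2) σ := by
  refine .of_bound ((continuous_const.inner continuous_id).pow 2).aestronglyMeasurable (‖x‖ ^ 2) ?_
  filter_upwards [ae_abs_inner_le_norm hσ x] with z hz
  simpa [abs_pow] using pow_le_pow_left₀ (abs_nonneg _) hz 2

lemma sum_integral_inner_sq_eq_one [IsProbabilityMeasure σ] {ι : Type*} [Fintype ι]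
    (b : OrthonormalBasis ι ℝ E) : ∑ i, ∫ z, ⟪b i, z⟫ ^ 2 ∂σ = 1 := by
  rw [← integral_finsetSum _ fun i _ => integrable_inner_sq hσ (b i)]
  have h : ∀ᵐ z ∂σ, ∑ i, ⟪b i, z⟫ ^ 2 = 1 := by
    filter_upwards [hσ] with z hz
    rw [b.sum_sq_inner_right, hz, one_pow]
  simp [integral_congr_ae h]

lemma integral_inner_sq_eq_norm_sq_div_finrank [IsProbabilityMeasure σ] [FiniteDimensional ℝ E]
    (hinv : ∀ R : E ≃ₗᵢ[ℝ] E, σ.map R = σ) (x : E) :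
    ∫ z, ⟪x, z⟫ ^ 2 ∂σ = ‖x‖ ^ 2 / finrank ℝ E := by
  set b := stdOrthonormalBasis ℝ E
  have hb : ∀ i, ∫ z, ⟪x, z⟫ ^ 2 ∂σ = ‖x‖ ^ 2 * ∫ z, ⟪b i, z⟫ ^ 2 ∂σ := fun i => by
    rw [integral_inner_sq_eq_of_norm_eq hinv (v := ‖x‖ • b i) (by simp [norm_smul])]
    simp [real_inner_smul_left, mul_pow, integral_const_mul]
  have hn : (0 : ℝ) < finrank ℝ E := by exact_mod_cast finrank_pos_of_ae_norm_eq_one hσ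
  rw [eq_div_iff hn.ne', mul_comm]
  calc (finrank ℝ E : ℝ) * ∫ z, ⟪x, z⟫ ^ 2 ∂σ = ∑ i, ‖x‖ ^ 2 * ∫ z, ⟪b i, z⟫ ^ 2 ∂σ := by
        simp [← hb]
    _ = ‖x‖ ^ 2 := by rw [← Finset.mul_sum, sum_integral_inner_sq_eq_one hσ b, mul_one]

lemma abs_integral_exp_inner_sub_le [IsProbabilityMeasure σ] [FiniteDimensional ℝ E]
    (hinv : ∀ R : E ≃ₗᵢ[ℝ] E, σ.map R = σ) {x : E} (hx : ‖x‖ ≤ 1) :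
    |∫ z, Real.exp ⟪x, z⟫ ∂σ - 1 - ‖x‖ ^ 2 / (2 * finrank ℝ E)| ≤ 2 / 9 * ‖x‖ ^ 3 := by
  have : σ.IsNegInvariant := ⟨hinv (.neg ℝ)⟩
  have hcont : Continuous fun z : E => ⟪x, z⟫ := continuous_const.inner continuous_id
  have hbound := ae_abs_inner_le_norm hσ x
  have hexp : Integrable (fun z => Real.exp ⟪x, z⟫) σ := by
    refine .of_bound (Real.continuous_exp.comp hcont).aestronglyMeasurable (Real.exp ‖x‖) ?_
    filter_upwards [hbound] with z hz
    simpa using (le_abs_self _).trans hz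
  have hlin : Integrable (fun z => ⟪x, z⟫) σ := .of_bound hcont.aestronglyMeasurable ‖x‖ hbound
  have hsq := (integrable_inner_sq hσ x).div_const 2
  have hmoments : ∫ z, Real.exp ⟪x, z⟫ ∂σ - 1 - ‖x‖ ^ 2 / (2 * finrank ℝ E)
      = ∫ z, (Real.exp ⟪x, z⟫ - 1 - ⟪x, z⟫ - ⟪x, z⟫ ^ 2 / 2) ∂σ := by
    rw [integral_sub, integral_sub, integral_sub hexp (integrable_const 1), integral_div,
      integral_inner_eq_zero, integral_inner_sq_eq_norm_sq_div_finrank hσ hinv]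
    · simp only [integral_const, probReal_univ, smul_eq_mul, mul_one]
      ring
    exacts [hexp.sub (integrable_const 1), hlin, (hexp.sub (integrable_const 1)).sub hlin, hsq]
  have hremainder : ∀ᵐ z ∂σ,
      ‖Real.exp ⟪x, z⟫ - 1 - ⟪x, z⟫ - ⟪x, z⟫ ^ 2 / 2‖ ≤ 2 / 9 * ‖x‖ ^ 3 := by
    filter_upwards [hbound] with z hz
    calc ‖Real.exp ⟪x, z⟫ - 1 - ⟪x, z⟫ - ⟪x, z⟫ ^ 2 / 2‖ ≤ 2 / 9 * |⟪x, z⟫| ^ 3 :=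
          Real.abs_exp_sub_one_sub_id_sub_sq_div_two_le (hz.trans hx)
      _ ≤ 2 / 9 * ‖x‖ ^ 3 := by gcongr
  rw [hmoments, ← Real.norm_eq_abs]
  simpa using norm_integral_le_of_norm_le_const hremainder

lemma abs_log_integral_exp_inner_sub_le [IsProbabilityMeasure σ] [FiniteDimensional ℝ E]
    (hinv : ∀ R : E ≃ₗᵢ[ℝ] E, σ.map R = σ) {x : E} (hx : ‖x‖ ≤ 1 / 2) :
    |Real.log (∫ z, Real.exp ⟪x, z⟫ ∂σ) - ‖x‖ ^ 2 / (2 * finrank ℝ E)| ≤ 3 * ‖x‖ ^ 3 := by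
  have hn : (1 : ℝ) ≤ finrank ℝ E := by exact_mod_cast finrank_pos_of_ae_norm_eq_one hσ
  refine Real.abs_log_sub_le_of_abs_sub_one_sub_le (norm_nonneg x) hx (by positivity) ?_
    (abs_integral_exp_inner_sub_le hσ hinv (hx.trans (by norm_num)))
  rw [div_le_div_iff₀ (by positivity) two_pos]
  nlinarith [sq_nonneg ‖x‖]

end Sphere

lemma abs_integral_sub_le_of_forall_norm_le {E Ω : Type*} [NormedAddCommGroup E]
    [MeasurableSpace E] [OpensMeasurableSpace E] [MeasurableSpace Ω] {ν : Measure Ω}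
    [IsProbabilityMeasure ν] {Δ : Ω → E} (hΔ : Measurable Δ) {g : E → ℝ} (hg : Measurable g)
    {lam C δ : ℝ} (hgδ : ∀ x, ‖x‖ ≤ δ → |g x - lam * ‖x‖ ^ 2| ≤ C * ‖x‖ ^ 3)
    (hΔδ : ∀ᵐ ω ∂ν, ‖Δ ω‖ ≤ δ) :
    |lam * (1 - ∫ ω, ‖Δ ω‖ ^ 2 ∂ν) + ∫ ω, g (Δ ω) ∂ν - lam| ≤ C * ∫ ω, ‖Δ ω‖ ^ 3 ∂ν := by
  have hpow : ∀ n : ℕ, Integrable (fun ω => ‖Δ ω‖ ^ n) ν := fun n => by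
    refine .of_bound (hΔ.norm.pow_const n).aestronglyMeasurable (δ ^ n) ?_
    filter_upwards [hΔδ] with ω hω
    simpa using pow_le_pow_left₀ (norm_nonneg _) hω n
  have hbound : ∀ᵐ ω ∂ν, ‖g (Δ ω) - lam * ‖Δ ω‖ ^ 2‖ ≤ C * ‖Δ ω‖ ^ 3 := by
    filter_upwards [hΔδ] with ω hω
    exact hgδ _ hω
  have herr : Integrable (fun ω => g (Δ ω) - lam * ‖Δ ω‖ ^ 2) ν :=
    ((hpow 3).const_mul C).mono' ((hg.comp hΔ).sub
      ((hΔ.norm.pow_const 2).const_mul lam)).aestronglyMeasurable hbound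
  have hsplit : lam * (1 - ∫ ω, ‖Δ ω‖ ^ 2 ∂ν) + ∫ ω, g (Δ ω) ∂ν - lam
      = ∫ ω, (g (Δ ω) - lam * ‖Δ ω‖ ^ 2) ∂ν := by
    have hg' : Integrable (fun ω => g (Δ ω)) ν :=
      (herr.add ((hpow 2).const_mul lam)).congr (.of_forall fun ω => by simp)
    rw [integral_sub hg' ((hpow 2).const_mul lam), integral_const_mul]
    ring
  rw [hsplit, ← Real.norm_eq_abs, ← integral_const_mul]
  exact norm_integral_le_of_norm_le ((hpow 3).const_mul C) hbound

theorem metra_penalty_approximates_contrastive_term_general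
    (d : ℕ)
    (σ : Measure (EuclideanSpace ℝ (Fin d))) [IsProbabilityMeasure σ]
    (hsupp : σ (Metric.sphere (0 : EuclideanSpace ℝ (Fin d)) 1)ᶜ = 0)
    (hinv : ∀ R : EuclideanSpace ℝ (Fin d) ≃ₗᵢ[ℝ] EuclideanSpace ℝ (Fin d),
      σ.map R = σ)
    (lam0 : ℝ) (hlam0 : lam0 = 1 / (2 * d)) :
    ∃ C > (0 : ℝ), ∃ δ > (0 : ℝ),
      ∀ (Ω : Type) (_ : MeasurableSpace Ω) (ν : Measure Ω),
        IsProbabilityMeasure ν →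
        ∀ Δ : Ω → EuclideanSpace ℝ (Fin d), Measurable Δ →
        (∃ M : ℝ, ∀ ω, ‖Δ ω‖ ≤ M) →
        (∀ᵐ ω ∂ν, ‖Δ ω‖ ≤ δ) →
        |lam0 * (1 - ∫ ω, ‖Δ ω‖ ^ 2 ∂ν)
            + (∫ ω, Real.log (∫ z, Real.exp ⟪Δ ω, z⟫ ∂σ) ∂ν) - lam0|
          ≤ C * ∫ ω, ‖Δ ω‖ ^ 3 ∂ν := by
  refine ⟨3, by norm_num, 1 / 2, by norm_num, fun Ω _ ν _ Δ hΔ _ hΔδ => ?_⟩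
  have hσ : ∀ᵐ z ∂σ, ‖z‖ = 1 := by
    filter_upwards [mem_ae_iff.mpr hsupp] with z hz
    exact mem_sphere_zero_iff_norm.mp hz
  have hmeas : Measurable fun x : EuclideanSpace ℝ (Fin d) => ∫ z, Real.exp ⟪x, z⟫ ∂σ :=
    (Real.continuous_exp.comp continuous_inner).stronglyMeasurable.integral_prod_right'.measurable
  refine abs_integral_sub_le_of_forall_norm_le hΔ (Real.measurable_log.comp hmeas)
    (fun x hx => ?_) hΔδ
  have h := abs_log_integral_exp_inner_sub_le hσ hinv hx
  rwa [finrank_euclideanSpace_fin, div_eq_mul_one_div _ (2 * (d : ℝ)), mul_comm, ← hlam0] at h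

/-- **Integrated form of Proposition 2 / Corollary 1.**
Let `σ` be the uniform probability measure on the unit sphere `𝕊^{d-1} ⊆ ℝ^d`
(a rotation-invariant probability measure supported on the sphere) and set
`λ₀ = 1/(2d)`.  There are constants `C > 0` and `δ > 0` such that for every
probability space `(Ω, ν)` and every bounded measurable `Δ : Ω → ℝ^d` with
`‖Δ(ω)‖ ≤ δ` for `ν`-a.e. `ω`,
`|λ₀(1 − ∫‖Δ‖² dν) + ∫ log(∫ e^{⟪Δ(ω),z⟫} dσ(z)) dν − λ₀| ≤ C ∫ ‖Δ‖³ dν`. -/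
theorem metra_penalty_approximates_contrastive_term
    (d : ℕ) (hd : 1 ≤ d)
    (σ : Measure (EuclideanSpace ℝ (Fin d))) [IsProbabilityMeasure σ]
    (hsupp : σ (Metric.sphere (0 : EuclideanSpace ℝ (Fin d)) 1)ᶜ = 0)
    (hinv : ∀ R : EuclideanSpace ℝ (Fin d) ≃ₗᵢ[ℝ] EuclideanSpace ℝ (Fin d),
      σ.map R = σ)
    (lam0 : ℝ) (hlam0 : lam0 = 1 / (2 * d)) :
    ∃ C > (0 : ℝ), ∃ δ > (0 : ℝ),
      ∀ (Ω : Type) (_ : MeasurableSpace Ω) (ν : Measure Ω),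
        IsProbabilityMeasure ν →
        ∀ Δ : Ω → EuclideanSpace ℝ (Fin d), Measurable Δ →
        (∃ M : ℝ, ∀ ω, ‖Δ ω‖ ≤ M) →
        (∀ᵐ ω ∂ν, ‖Δ ω‖ ≤ δ) →
        |lam0 * (1 - ∫ ω, ‖Δ ω‖ ^ 2 ∂ν)
            + (∫ ω, Real.log (∫ z, Real.exp ⟪Δ ω, z⟫ ∂σ) ∂ν) - lam0|
          ≤ C * ∫ ω, ‖Δ ω‖ ^ 3 ∂ν :=
  metra_penalty_approximates_contrastive_term_general d σ hsupp hinv lam0 hlam0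
end

section
/- Let X and Z be nonempty finite types and let p : X × Z → ℝ be a probability mass function (p ≥ 0 and ∑_{x,z} p(x,z) = 1), with marginals p_X(x) = ∑_z p(x,z) and p_Z(z) = ∑_x p(x,z). Then for every function f : X × Z → ℝ, ∑_{(x,z) : p(x,z) > 0} p(x,z) · log ( p(x,z) / (p_X(x) · p_Z(z)) ) ≥ ∑_{x,z} p(x,z) · f(x,z) − ∑_x p_X(x) · log ( ∑_z p_Z(z) · e^{f(x,z)} ). That is, the mutual information I(X;Z) is lower-bounded by the unnormalized variational (UBA) bound E_{p(x,z)}[f(x,z)] − E_{p_X}[log E_{p_Z}[e^{f(x,z')}]]. -/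
/-!
The gap between the two sides is a relative entropy. Tilt the product of the marginals by the
critic, `b(x,z) = p_X(x) p_Z(z) e^{f(x,z)} / c(x)` with `c(x) = ∑_z p_Z(z) e^{f(x,z)}`. On the
support of `p`, `log (p / (p_X p_Z)) - f + log c = log (p / b)`, so the gap is `∑ p log (p / b)`,
which by Gibbs' inequality is at least `∑ p - ∑ b ≥ 0`: the tilt has mass at most that of `p`.
-/

open Finset Real

theorem Real.sub_le_mul_log_div {a b : ℝ} (ha : 0 ≤ a) (hb : 0 < b) :
    a - b ≤ a * log (a / b) := by
  have h := mul_le_mul_of_nonneg_left (self_sub_one_le_mul_log (div_nonneg ha hb.le)) hb.le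
  calc a - b = b * (a / b - 1) := by field_simp
    _ ≤ b * (a / b * log (a / b)) := h
    _ = a * log (a / b) := by field_simp

theorem Real.sum_sub_sum_le_sum_mul_log_div {ι : Type*} (s : Finset ι) {p b : ι → ℝ}
    (hp : ∀ i ∈ s, 0 ≤ p i) (hb : ∀ i ∈ s, 0 < b i) :
    ∑ i ∈ s, p i - ∑ i ∈ s, b i ≤ ∑ i ∈ s, p i * log (p i / b i) := by
  rw [← sum_sub_distrib]
  exact sum_le_sum fun i hi => sub_le_mul_log_div (hp i hi) (hb i hi)

theorem Finset.sum_filter_pos_mul_eq {ι : Type*} (s : Finset ι) {p : ι → ℝ}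
    (hp : ∀ i ∈ s, 0 ≤ p i) (g : ι → ℝ) :
    ∑ i ∈ s with 0 < p i, p i * g i = ∑ i ∈ s, p i * g i :=
  sum_filter_of_ne fun i hi hne => (hp i hi).lt_of_ne' (left_ne_zero_of_mul hne)

section Tilt

variable {X Z : Type*} [Fintype Z]

theorem sum_marginal_mul_eq [Fintype X] {p : X × Z → ℝ} {pX : X → ℝ}
    (hpX : ∀ x, pX x = ∑ z, p (x, z)) (g : X → ℝ) : ∑ x, pX x * g x = ∑ q, p q * g q.1 := by
  simp only [hpX, sum_mul, Fintype.sum_prod_type]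

noncomputable def tiltNormalizer (pZ : Z → ℝ) (f : X × Z → ℝ) (x : X) : ℝ :=
  ∑ z, pZ z * exp (f (x, z))

noncomputable def tilt (pX : X → ℝ) (pZ : Z → ℝ) (f : X × Z → ℝ) (q : X × Z) : ℝ :=
  pX q.1 * pZ q.2 * exp (f q) / tiltNormalizer pZ f q.1

theorem tiltNormalizer_nonneg {pZ : Z → ℝ} (hpZ : ∀ z, 0 ≤ pZ z) (f : X × Z → ℝ) (x : X) :
    0 ≤ tiltNormalizer pZ f x :=
  sum_nonneg fun z _ => mul_nonneg (hpZ z) (exp_pos _).le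

theorem tiltNormalizer_pos {pZ : Z → ℝ} (hpZ : ∀ z, 0 ≤ pZ z) (f : X × Z → ℝ) (x : X) {z : Z}
    (hz : 0 < pZ z) : 0 < tiltNormalizer pZ f x :=
  sum_pos' (fun z _ => mul_nonneg (hpZ z) (exp_pos _).le) ⟨z, mem_univ _, mul_pos hz (exp_pos _)⟩

theorem tilt_nonneg {pX : X → ℝ} {pZ : Z → ℝ} (hpX : ∀ x, 0 ≤ pX x) (hpZ : ∀ z, 0 ≤ pZ z)
    (f : X × Z → ℝ) (q : X × Z) : 0 ≤ tilt pX pZ f q :=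
  div_nonneg (mul_nonneg (mul_nonneg (hpX _) (hpZ _)) (exp_pos _).le)
    (tiltNormalizer_nonneg hpZ f _)

theorem tilt_pos {pX : X → ℝ} {pZ : Z → ℝ} (hpZ : ∀ z, 0 ≤ pZ z) (f : X × Z → ℝ)
    {q : X × Z} (hX : 0 < pX q.1) (hZ : 0 < pZ q.2) : 0 < tilt pX pZ f q :=
  div_pos (by positivity) (tiltNormalizer_pos hpZ f q.1 hZ)

theorem sum_tilt_le [Fintype X] {pX : X → ℝ} (hpX : ∀ x, 0 ≤ pX x) (pZ : Z → ℝ)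
    (f : X × Z → ℝ) :
    ∑ q, tilt pX pZ f q ≤ ∑ x, pX x := by
  rw [Fintype.sum_prod_type]
  refine sum_le_sum fun x _ => ?_
  calc ∑ z, tilt pX pZ f (x, z)
      = pX x * (tiltNormalizer pZ f x / tiltNormalizer pZ f x) := by
        simp only [tilt, mul_assoc, ← sum_div, ← mul_sum]
        exact mul_div_assoc _ _ _
    _ ≤ pX x := mul_le_of_le_one_right (hpX x) (div_self_le_one _)

theorem log_div_tilt {pX : X → ℝ} {pZ : Z → ℝ} (hpZ : ∀ z, 0 ≤ pZ z) (f : X × Z → ℝ)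
    {q : X × Z} (hX : 0 < pX q.1) (hZ : 0 < pZ q.2) {a : ℝ} (ha : a ≠ 0) :
    log (a / tilt pX pZ f q) = log (a / (pX q.1 * pZ q.2)) - f q
      + log (tiltNormalizer pZ f q.1) := by
  have hc := tiltNormalizer_pos hpZ f q.1 hZ
  rw [tilt, log_div ha (by positivity), log_div ha (by positivity),
    log_div (by positivity) hc.ne', log_mul (by positivity) (exp_pos _).ne', log_exp]
  ring

end Tilt

open Classical in
theorem mutual_information_uba_lower_bound_general
    {X Z : Type*} [Fintype X] [Fintype Z]
    (p : X × Z → ℝ) (hp0 : ∀ q, 0 ≤ p q)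
    (pX : X → ℝ) (hpX : ∀ x, pX x = ∑ z : Z, p (x, z))
    (pZ : Z → ℝ) (hpZ : ∀ z, pZ z = ∑ x : X, p (x, z))
    (f : X × Z → ℝ) :
    ∑ q ∈ Finset.univ.filter (fun q : X × Z => 0 < p q),
        p q * Real.log (p q / (pX q.1 * pZ q.2))
      ≥ (∑ q : X × Z, p q * f q)
        - ∑ x : X, pX x * Real.log (∑ z : Z, pZ z * Real.exp (f (x, z))) := by
  show _ ≥ _ - ∑ x, pX x * log (tiltNormalizer pZ f x)
  set T := univ.filter fun q : X × Z => 0 < p q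
  have hpX0 : ∀ x, 0 ≤ pX x := fun x => hpX x ▸ sum_nonneg fun z _ => hp0 _
  have hpZ0 : ∀ z, 0 ≤ pZ z := fun z => hpZ z ▸ sum_nonneg fun x _ => hp0 _
  have hsupp : ∀ q ∈ T, 0 < p q ∧ 0 < pX q.1 ∧ 0 < pZ q.2 := fun q hq => by
    have hq : 0 < p q := (mem_filter.mp hq).2
    exact ⟨hq, hpX q.1 ▸ sum_pos' (fun z _ => hp0 _) ⟨q.2, mem_univ _, hq⟩,
      hpZ q.2 ▸ sum_pos' (fun x _ => hp0 _) ⟨q.1, mem_univ _, hq⟩⟩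
  have hrestrict := sum_filter_pos_mul_eq univ fun q _ => hp0 q
  have hgap : ∑ q ∈ T, p q * log (p q / (pX q.1 * pZ q.2))
      - ((∑ q, p q * f q) - ∑ x, pX x * log (tiltNormalizer pZ f x))
      = ∑ q ∈ T, p q * log (p q / tilt pX pZ f q) := by
    rw [sum_marginal_mul_eq hpX, ← hrestrict, ← hrestrict, ← sum_sub_distrib, ← sum_sub_distrib]
    refine sum_congr rfl fun q hq => ?_
    obtain ⟨hp, hX, hZ⟩ := hsupp q hq
    rw [log_div_tilt hpZ0 f hX hZ hp.ne']
    ring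
  have hgibbs := sum_sub_sum_le_sum_mul_log_div T (b := tilt pX pZ f)
    (fun q hq => (hsupp q hq).1.le)
    fun q hq => tilt_pos hpZ0 f (hsupp q hq).2.1 (hsupp q hq).2.2
  have hmass : ∑ q ∈ T, tilt pX pZ f q ≤ ∑ q ∈ T, p q := calc
    _ ≤ ∑ q, tilt pX pZ f q :=
        sum_le_sum_of_subset_of_nonneg (filter_subset _ _) fun q _ _ => tilt_nonneg hpX0 hpZ0 f q
    _ ≤ ∑ x, pX x := sum_tilt_le hpX0 pZ f
    _ = ∑ q ∈ T, p q := by simpa using (sum_marginal_mul_eq hpX 1).trans (hrestrict 1).symm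
  linarith

open Classical in
/-- **Unnormalized variational (UBA) lower bound on mutual information.**
For a joint pmf `p` on a finite product `X × Z` with marginals `pX`, `pZ`, and
any critic `f : X × Z → ℝ`,
`I(X;Z) ≥ E_{p}[f] − E_{pX}[log E_{pZ}[e^{f}]]`. -/
theorem mutual_information_uba_lower_bound
    {X Z : Type*} [Fintype X] [Fintype Z] [Nonempty X] [Nonempty Z]
    (p : X × Z → ℝ) (hp0 : ∀ q, 0 ≤ p q) (hp1 : ∑ q : X × Z, p q = 1)
    (pX : X → ℝ) (hpX : ∀ x, pX x = ∑ z : Z, p (x, z))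
    (pZ : Z → ℝ) (hpZ : ∀ z, pZ z = ∑ x : X, p (x, z))
    (f : X × Z → ℝ) :
    ∑ q ∈ Finset.univ.filter (fun q : X × Z => 0 < p q),
        p q * Real.log (p q / (pX q.1 * pZ q.2))
      ≥ (∑ q : X × Z, p q * f q)
        - ∑ x : X, pX x * Real.log (∑ z : Z, pZ z * Real.exp (f (x, z))) :=
  mutual_information_uba_lower_bound_general p hp0 pX hpX pZ hpZ f
end

section
/- Let X and Z be nonempty finite types and let p : X × Z → ℝ be a probability mass function with marginals p_X(x) = ∑_z p(x,z) and p_Z(z) = ∑_x p(x,z). Let q : X × Z → ℝ satisfy q(x,z) ≥ 0, ∑_z q(x,z) = 1 for every x, and q(x,z) > 0 whenever p(x,z) > 0. Then ∑_{(x,z) : p(x,z) > 0} p(x,z) · log ( p(x,z) / (p_X(x) · p_Z(z)) ) ≥ − ∑_{z : p_Z(z) > 0} p_Z(z) · log p_Z(z) + ∑_{(x,z) : p(x,z) > 0} p(x,z) · log q(x,z). That is, the mutual information I(X;Z) is lower-bounded by H(Z) plus the expected log-likelihood of any variational conditional distribution q(z | x). -/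
open Finset

open Classical in
/-- **Barber–Agakov variational lower bound on mutual information.**
For a joint pmf `p` on a finite product `X × Z` with marginals `pX`, `pZ`, and
any variational conditional `q(z | x)` (nonnegative, summing to one in `z`,
positive wherever `p` is positive),
`I(X;Z) ≥ H(Z) + E_{p}[log q(z | x)]`. -/
theorem mutual_information_barber_agakov_lower_bound
    {X Z : Type*} [Fintype X] [Fintype Z] [Nonempty X] [Nonempty Z]
    (p : X × Z → ℝ) (hp0 : ∀ q, 0 ≤ p q) (hp1 : ∑ q : X × Z, p q = 1)
    (pX : X → ℝ) (hpX : ∀ x, pX x = ∑ z : Z, p (x, z))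
    (pZ : Z → ℝ) (hpZ : ∀ z, pZ z = ∑ x : X, p (x, z))
    (q : X × Z → ℝ) (hq0 : ∀ r, 0 ≤ q r) (hq1 : ∀ x, ∑ z : Z, q (x, z) = 1)
    (hqpos : ∀ r, 0 < p r → 0 < q r) :
    ∑ r ∈ Finset.univ.filter (fun r : X × Z => 0 < p r),
        p r * Real.log (p r / (pX r.1 * pZ r.2))
      ≥ (- ∑ z ∈ Finset.univ.filter (fun z : Z => 0 < pZ z),
            pZ z * Real.log (pZ z))
        + ∑ r ∈ Finset.univ.filter (fun r : X × Z => 0 < p r),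
            p r * Real.log (q r) := by
  set S : Finset (X × Z) := Finset.univ.filter (fun r : X × Z => 0 < p r) with hSdef
  have hmemS : ∀ r ∈ S, 0 < p r := fun r hr => (Finset.mem_filter.mp hr).2
  have hpXpos : ∀ r ∈ S, 0 < pX r.1 := by
    intro r hr
    have h1 : p r ≤ ∑ z : Z, p (r.1, z) := by
      have := Finset.single_le_sum (f := fun z => p (r.1, z))
        (fun z _ => hp0 _) (Finset.mem_univ r.2)
      simpa using this
    have := hmemS r hr
    rw [hpX]; linarith
  have hpZpos : ∀ r ∈ S, 0 < pZ r.2 := by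
    intro r hr
    have h1 : p r ≤ ∑ x : X, p (x, r.2) := by
      have := Finset.single_le_sum (f := fun x => p (x, r.2))
        (fun x _ => hp0 _) (Finset.mem_univ r.1)
      simpa using this
    have := hmemS r hr
    rw [hpZ]; linarith
  have hqpos' : ∀ r ∈ S, 0 < q r := fun r hr => hqpos r (hmemS r hr)
  -- the entropy term as an expectation over the joint
  have hB : ∑ z ∈ Finset.univ.filter (fun z : Z => 0 < pZ z), pZ z * Real.log (pZ z)
      = ∑ r ∈ S, p r * Real.log (pZ r.2) := by
    have hpZ0 : ∀ z, 0 ≤ pZ z := by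
      intro z; rw [hpZ]; exact Finset.sum_nonneg fun x _ => hp0 _
    have e1 : ∑ z ∈ Finset.univ.filter (fun z : Z => 0 < pZ z), pZ z * Real.log (pZ z)
        = ∑ z : Z, pZ z * Real.log (pZ z) := by
      apply Finset.sum_filter_of_ne
      intro z _ hz
      rcases lt_or_eq_of_le (hpZ0 z) with h | h
      · exact h
      · exact absurd (by rw [← h]; ring) hz
    have e2 : ∑ r ∈ S, p r * Real.log (pZ r.2)
        = ∑ r : X × Z, p r * Real.log (pZ r.2) := by
      apply Finset.sum_filter_of_ne
      intro r _ hr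
      rcases lt_or_eq_of_le (hp0 r) with h | h
      · exact h
      · exact absurd (by rw [← h]; ring) hr
    rw [e1, e2]
    rw [Fintype.sum_prod_type, Finset.sum_comm]
    apply Finset.sum_congr rfl
    intro z _
    nth_rewrite 1 [hpZ z]
    rw [Finset.sum_mul]
  -- combine the three sums into a single KL sum
  have key : ∑ r ∈ S, p r * Real.log (p r / (pX r.1 * pZ r.2))
      = (∑ r ∈ S, p r * Real.log (p r / (pX r.1 * q r)))
        - (∑ r ∈ S, p r * Real.log (pZ r.2))
        + ∑ r ∈ S, p r * Real.log (q r) := by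
    rw [← Finset.sum_sub_distrib, ← Finset.sum_add_distrib]
    apply Finset.sum_congr rfl
    intro r hr
    have h1 := hmemS r hr
    have h2 := hpXpos r hr
    have h3 := hpZpos r hr
    have h4 := hqpos' r hr
    rw [Real.log_div h1.ne' (by positivity), Real.log_div h1.ne' (by positivity),
        Real.log_mul h2.ne' h3.ne', Real.log_mul h2.ne' h4.ne']
    ring
  -- total mass facts
  have hsum1 : ∑ r ∈ S, p r = 1 := by
    rw [← hp1]
    symm
    apply (Finset.sum_filter_of_ne ?_).symm
    intro r _ hr
    rcases lt_or_eq_of_le (hp0 r) with h | h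
    · exact h
    · exact absurd h.symm hr
  have hm1 : ∑ r : X × Z, pX r.1 * q r = 1 := by
    rw [Fintype.sum_prod_type]
    have : ∀ x : X, ∑ z : Z, pX x * q (x, z) = pX x := by
      intro x
      rw [← Finset.mul_sum, hq1 x, mul_one]
    rw [Finset.sum_congr rfl fun x _ => this x]
    rw [← hp1, Fintype.sum_prod_type]
    exact Finset.sum_congr rfl fun x _ => hpX x
  -- KL nonnegativity via log t ≤ t - 1
  have hKL : 0 ≤ ∑ r ∈ S, p r * Real.log (p r / (pX r.1 * q r)) := by
    have hstep : ∑ r ∈ S, p r * Real.log ((pX r.1 * q r) / p r)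
        ≤ ∑ r ∈ S, (pX r.1 * q r - p r) := by
      apply Finset.sum_le_sum
      intro r hr
      have h1 := hmemS r hr
      have h2 := hpXpos r hr
      have h4 := hqpos' r hr
      have hpos : 0 < (pX r.1 * q r) / p r := by positivity
      have := Real.log_le_sub_one_of_pos hpos
      have h5 : p r * Real.log ((pX r.1 * q r) / p r)
          ≤ p r * ((pX r.1 * q r) / p r - 1) :=
        mul_le_mul_of_nonneg_left this h1.le
      have h6 : p r * ((pX r.1 * q r) / p r - 1) = pX r.1 * q r - p r := by
        field_simp
      linarith
    have hle : ∑ r ∈ S, (pX r.1 * q r - p r) ≤ 0 := by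
      rw [Finset.sum_sub_distrib, hsum1]
      have : ∑ r ∈ S, pX r.1 * q r ≤ ∑ r : X × Z, pX r.1 * q r := by
        apply Finset.sum_le_sum_of_subset_of_nonneg (Finset.subset_univ S)
        intro r _ _
        have := hpX r.1
        have hx : 0 ≤ pX r.1 := by
          rw [this]; exact Finset.sum_nonneg fun z _ => hp0 _
        exact mul_nonneg hx (hq0 r)
      rw [hm1] at this
      linarith
    have hneg : ∑ r ∈ S, p r * Real.log ((pX r.1 * q r) / p r)
        = - ∑ r ∈ S, p r * Real.log (p r / (pX r.1 * q r)) := by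
      rw [← Finset.sum_neg_distrib]
      apply Finset.sum_congr rfl
      intro r hr
      have h1 := hmemS r hr
      have h2 := hpXpos r hr
      have h4 := hqpos' r hr
      rw [Real.log_div (by positivity) h1.ne', Real.log_div h1.ne' (by positivity)]
      ring
    rw [hneg] at hstep
    linarith [le_trans hstep hle]
  rw [hB, key]
  linarith
end
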